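/- Under the shortest-path-tree separator setup, let t ∈ V and let p be the unique vertex such that the intersection of the path in T from s to t with the path in T from s to r is exactly the path in T from s to p (p is the least common ancestor of t and r in T rooted at s). Then: (1) for every edge e of the path in T from s to p, every s–t path in G that is departing for e does not contain p; and (2) for every edge e of the path in T from p to r, d_{G∖e}(s,t) = d_G(s,t). -/

import Mathlib

open SimpleGraph

/-- In an acyclic graph, the length of any path equals the extended distance
between its endpoints. -/
lemma tree_path_length_eq_edist {V : Type*} [DecidableEq V] {T : SimpleGraph V} (hT : T.IsAcyclic)
    {a b : V} (p : T.Walk a b) (hp : p.IsPath) : T.edist a b = p.length := by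
  refine le_antisymm p.edist_le ?_
  obtain ⟨q, hq⟩ := (p.reachable).exists_walk_length_eq_edist
  have hb : q.bypass.length ≤ q.length := q.length_bypass_le
  have := hT.path_unique ⟨p, hp⟩ ⟨q.bypass, q.bypass_isPath⟩
  have hlen : p.length = q.bypass.length := by
    rw [show p = q.bypass from congrArg Subtype.val this]
  rw [hlen, ← hq]
  exact_mod_cast hb

/-- Under the shortest-path-tree separator setup, let `t ∈ V` and let `l` be
the vertex such that the intersection of the path in `T` from `s` to `t` with the primary path
`P` (from `s` to `r`) is exactly the path in `T` from `s` to `l` (the LCA of `t` and `r`).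
Then (1) for every edge `e` of the path from `s` to `l`, every `s`–`t` path in `G` departing
for `e` does not contain `l`; and (2) for every edge `e` of the path from `l` to `r`,
`d_{G∖e}(s,t) = d_G(s,t)`. -/
theorem stmt_11 {V : Type*} [Fintype V] (G : SimpleGraph V) (hG : G.Connected)
    (s r : V) (T : SimpleGraph V) (hTG : T ≤ G) (hT : T.IsTree)
    (hSPT : ∀ v : V, T.edist s v = G.edist s v)
    (M N : T.Subgraph) (hMc : M.Connected) (hNc : N.Connected)
    (hEdisj : Disjoint M.edgeSet N.edgeSet)
    (hEunion : M.edgeSet ∪ N.edgeSet = T.edgeSet)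
    (hVunion : M.verts ∪ N.verts = Set.univ)
    (hVinter : M.verts ∩ N.verts = {r})
    (hsM : s ∈ M.verts)
    (P : T.Walk s r) (hP : P.IsPath)
    (t l : V)
    (pt : T.Walk s t) (hpt : pt.IsPath)
    (psl : T.Walk s l) (hpsl : psl.IsPath)
    (hlca : ∀ v : V, (v ∈ pt.support ∧ v ∈ P.support) ↔ v ∈ psl.support)
    (plr : T.Walk l r) (hplr : plr.IsPath) :
    (∀ x y : V, s(x, y) ∈ psl.edges → G.edist s x < G.edist s y →
      ∀ w : G.Walk s t, w.IsPath →
        s(x, y) ∉ w.edges →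
        (∀ u ∈ w.support, u ∈ P.support → G.edist s u ≤ G.edist s x) →
        l ∉ w.support) ∧
    (∀ x y : V, s(x, y) ∈ plr.edges →
      (G.deleteEdges {s(x, y)}).edist s t = G.edist s t) := by
  classical
  have hac : T.IsAcyclic := hT.IsAcyclic
  have hlP : l ∈ P.support := ((hlca l).2 psl.end_mem_support).2
  constructor
  · -- Part (1)
    intro x y hxy hlt w hw hnoe hdep hlw
    -- `y` lies on `psl`, so `G.edist s y ≤ G.edist s l`.
    have hy : y ∈ psl.support := psl.snd_mem_support_of_mem_edges hxy
    have h1 : T.edist s y ≤ (psl.takeUntil y hy).length :=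
      (psl.takeUntil y hy).edist_le
    have h2 : (psl.takeUntil y hy).length ≤ psl.length :=
      psl.length_takeUntil_le hy
    have h3 : T.edist s l = psl.length := tree_path_length_eq_edist hac psl hpsl
    have hyl : G.edist s y ≤ G.edist s l := by
      rw [← hSPT y, ← hSPT l, h3]
      exact h1.trans (by exact_mod_cast h2)
    have := hdep l hlw hlP
    exact absurd (hlt.trans_le hyl) (not_lt.mpr this)
  · -- Part (2)
    intro x y hxy
    set e : Sym2 V := s(x, y) with he
    -- psl = P.takeUntil l, plr = P.dropUntil l
    have hpsl' : psl = P.takeUntil l hlP := by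
      have := hac.path_unique ⟨psl, hpsl⟩ ⟨P.takeUntil l hlP, hP.takeUntil hlP⟩
      exact congrArg Subtype.val this
    have hplr' : plr = P.dropUntil l hlP := by
      have := hac.path_unique ⟨plr, hplr⟩ ⟨P.dropUntil l hlP, hP.dropUntil hlP⟩
      exact congrArg Subtype.val this
    -- the edge `e` is not on `pt`
    have hnot : e ∉ pt.edges := by
      intro hmem
      have hadj : T.Adj x y := pt.adj_of_mem_edges hmem
      have hxne : x ≠ y := hadj.ne
      -- x and y are on pt and on plr ⊆ P, hence on psl = takeUntil
      have key : ∀ z : V, s(x, y) ∈ plr.edges → z ∈ pt.support → z ∈ plr.support → z = l := by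
        intro z _ hzpt hzplr
        have hzP : z ∈ P.support := by
          rw [hplr'] at hzplr
          have := P.take_spec hlP
          rw [← this]
          exact Walk.subset_support_append_right _ _ hzplr
        have hzpsl : z ∈ psl.support := (hlca z).1 ⟨hzpt, hzP⟩
        -- z is in takeUntil and dropUntil supports; path nodup forces z = l
        by_contra hzl
        have hnodup : P.support.Nodup := hP.support_nodup
        rw [← P.take_spec hlP, Walk.support_append] at hnodup
        have hzdrop : z ∈ (P.dropUntil l hlP).support.tail := by
          rw [hplr'] at hzplr
          have : (P.dropUntil l hlP).support = l :: (P.dropUntil l hlP).support.tail := by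
            rw [← Walk.support_eq_cons]
          rw [this] at hzplr
          rcases List.mem_cons.mp hzplr with h | h
          · exact absurd h hzl
          · exact h
        have hztake : z ∈ (P.takeUntil l hlP).support := by rw [← hpsl']; exact hzpsl
        exact (List.disjoint_of_nodup_append hnodup) hztake hzdrop
      have hx : x = l := key x hxy (pt.fst_mem_support_of_mem_edges hmem)
        (plr.fst_mem_support_of_mem_edges hxy)
      have hy : y = l := key y hxy (pt.snd_mem_support_of_mem_edges hmem)
        (plr.snd_mem_support_of_mem_edges hxy)
      exact hxne (hx.trans hy.symm)
    -- transfer pt to G.deleteEdges {e}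
    have hsub : ∀ e' ∈ pt.edges, e' ∈ (G.deleteEdges {e}).edgeSet := by
      intro e' he'
      rw [edgeSet_deleteEdges]
      refine ⟨?_, ?_⟩
      · exact edgeSet_mono hTG (pt.edges_subset_edgeSet he')
      · simp only [Set.mem_singleton_iff]
        intro h
        exact hnot (h ▸ he')
    have hle : (G.deleteEdges {e}).edist s t ≤ G.edist s t := by
      have := (pt.transfer (G.deleteEdges {e}) hsub).edist_le
      rw [Walk.length_transfer] at this
      refine this.trans ?_
      rw [← hSPT t, tree_path_length_eq_edist hac pt hpt]
    have hge : G.edist s t ≤ (G.deleteEdges {e}).edist s t :=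
      edist_anti (deleteEdges_le _)
    exact le_antisymm hle hge
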